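/- Assume E[W] ≠ 0, E[W²] < ∞, and Var(W) > 0. Then for every t > 0, P(n · (μ̂_n/σ̂_n)² > t) → 1 as n → ∞. -/

import Mathlib

/-! By the strong law of large numbers, applied to `W` and to `W²`, almost surely
`μ̂_n → E[W]` and `σ̂_n² → E[W²] - E[W]² = Var(W) > 0`, so `n (μ̂_n/σ̂_n)² → ∞` almost surely.
Hence almost every `ω` lies in all but finitely many of the events `{n (μ̂_n/σ̂_n)² > t}`,
which forces their probabilities to `1`. -/

open MeasureTheory ProbabilityTheory Filter

/-- The Gaussian kernel `k(x, x') = exp(−‖x − x'‖₂²/σ₀)` on `ℝ^q`. -/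
noncomputable def gaussKernel (σ₀ : ℝ) {q : ℕ} (x y : EuclideanSpace ℝ (Fin q)) : ℝ :=
  Real.exp (-‖x - y‖ ^ 2 / σ₀)

open Finset Topology

noncomputable section

def sampleMean (w : ℕ → ℝ) (n : ℕ) : ℝ :=
  (n : ℝ)⁻¹ * ∑ i ∈ range n, w i

def sampleVariance (w : ℕ → ℝ) (n : ℕ) : ℝ :=
  ((n : ℝ) - 1)⁻¹ * ∑ i ∈ range n, (w i - sampleMean w n) ^ 2

end

theorem sampleMean_eq_sum_div (w : ℕ → ℝ) (n : ℕ) :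
    sampleMean w n = (∑ i ∈ range n, w i) / n :=
  inv_mul_eq_div _ _

theorem sum_sq_sub_sampleMean (w : ℕ → ℝ) (n : ℕ) :
    ∑ i ∈ range n, (w i - sampleMean w n) ^ 2
      = ∑ i ∈ range n, w i ^ 2 - n * sampleMean w n ^ 2 := by
  obtain rfl | hn := eq_or_ne n 0
  · simp
  have hsum : ∑ i ∈ range n, w i = n * sampleMean w n := by
    rw [sampleMean]; field_simp
  simp only [sub_sq, sum_add_distrib, sum_sub_distrib, ← sum_mul, ← mul_sum, hsum,
    sum_const, card_range, nsmul_eq_mul]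
  ring

theorem sampleVariance_eq (w : ℕ → ℝ) (n : ℕ) :
    sampleVariance w n
      = n / (n - 1) * ((∑ i ∈ range n, w i ^ 2) / n - sampleMean w n ^ 2) := by
  obtain rfl | hn := eq_or_ne n 0
  · simp [sampleVariance]
  have hn' : (n : ℝ) ≠ 0 := Nat.cast_ne_zero.2 hn
  rw [sampleVariance, sum_sq_sub_sampleMean]
  field_simp

theorem tendsto_sampleVariance {w : ℕ → ℝ} {m s : ℝ}
    (hmean : Tendsto (fun n : ℕ => (∑ i ∈ range n, w i) / n) atTop (𝓝 m))
    (hsq : Tendsto (fun n : ℕ => (∑ i ∈ range n, w i ^ 2) / n) atTop (𝓝 s)) :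
    Tendsto (sampleVariance w) atTop (𝓝 (s - m ^ 2)) := by
  have hratio : Tendsto (fun n : ℕ => (n : ℝ) / (n - 1)) atTop (𝓝 1) := by
    simpa only [sub_eq_add_neg] using tendsto_natCast_div_add_atTop (-1 : ℝ)
  have hmean' : Tendsto (sampleMean w) atTop (𝓝 m) :=
    hmean.congr fun n => (sampleMean_eq_sum_div w n).symm
  simpa only [one_mul] using (hratio.mul (hsq.sub (hmean'.pow 2))).congr fun n =>
    (sampleVariance_eq w n).symm

theorem tendsto_natCast_mul_sq_div_atTop {a b : ℕ → ℝ} {m s : ℝ}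
    (ha : Tendsto a atTop (𝓝 m)) (hb : Tendsto b atTop (𝓝 s)) (hm : m ≠ 0) (hs : s ≠ 0) :
    Tendsto (fun n : ℕ => (n : ℝ) * (a n / b n) ^ 2) atTop atTop :=
  tendsto_natCast_atTop_atTop.atTop_mul_pos (pow_two_pos_of_ne_zero (div_ne_zero hm hs))
    ((ha.div hb hs).pow 2)

theorem tendsto_measure_of_ae_eventually_mem {Ω : Type*} [MeasurableSpace Ω]
    {P : Measure Ω} [IsProbabilityMeasure P] {A : ℕ → Set Ω}
    (h : ∀ᵐ ω ∂P, ∀ᶠ n in atTop, ω ∈ A n) :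
    Tendsto (fun n => P (A n)) atTop (𝓝 1) := by
  set D : ℕ → Set Ω := fun n => ⋂ m ∈ Set.Ici n, A m
  have hDmono : Monotone D := fun a b hab =>
    Set.biInter_subset_biInter_left (Set.Ici_subset_Ici.2 hab)
  have hD : P (⋃ n, D n) = 1 := by
    refine (measure_congr ?_).trans measure_univ
    rw [eventuallyEq_set]
    filter_upwards [h] with ω hω
    obtain ⟨N, hN⟩ := eventually_atTop.1 hω
    simpa using ⟨N, Set.mem_biInter fun m hm => hN m hm⟩
  refine tendsto_of_tendsto_of_tendsto_of_le_of_le (hD ▸ tendsto_measure_iUnion_atTop hDmono)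
    tendsto_const_nhds (fun n => measure_mono ?_) (fun _ => prob_le_one)
  exact Set.biInter_subset_of_mem (Set.mem_Ici.2 le_rfl)

theorem strong_law_ae_of_eq_comp {Ω β : Type*} [MeasurableSpace Ω] [MeasurableSpace β]
    {P : Measure Ω} {Y : ℕ → Ω → β} (hindep : iIndepFun Y P)
    (hident : ∀ i, IdentDistrib (Y i) (Y 0) P P) {g : β → ℝ} (hg : Measurable g)
    {f : ℕ → Ω → ℝ} (hf : ∀ i ω, f i ω = g (Y i ω)) (hint : Integrable (f 0) P) :
    ∀ᵐ ω ∂P, Tendsto (fun n : ℕ => (∑ i ∈ range n, f i ω) / n) atTop (𝓝 (∫ ω, f 0 ω ∂P)) := by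
  obtain rfl : f = fun i => g ∘ Y i := funext fun i => funext (hf i)
  exact strong_law_ae_real _ hint
    (fun _ _ hij => (hindep.comp (fun _ => g) (fun _ => hg)).indepFun hij)
    (fun i => (hident i).comp hg)

theorem svm_tstat_consistency_fixed_alternative_general
    {Ω : Type*} [MeasurableSpace Ω] (P : Measure Ω) [IsProbabilityMeasure P]
    (q J : ℕ) (x : Fin J → EuclideanSpace ℝ (Fin q)) (η : Fin J → ℝ)
    (σ₀ : ℝ)
    (X : ℕ → Ω → EuclideanSpace ℝ (Fin q)) (ε : ℕ → Ω → ℝ)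
    (hindep : iIndepFun (fun i ω => (X i ω, ε i ω)) P)
    (hident : ∀ i, IdentDistrib (fun ω => (X i ω, ε i ω)) (fun ω => (X 0 ω, ε 0 ω)) P P)
    (W : ℕ → Ω → ℝ)
    (hW : ∀ i ω, W i ω = ∑ j : Fin J, η j * ε i ω * gaussKernel σ₀ (X i ω) (x j))
    (hmean : ∫ ω, W 0 ω ∂P ≠ 0)
    (hWL2 : MemLp (W 0) 2 P)
    (hvar : 0 < variance (W 0) P)
    (μhat σhat : ℕ → Ω → ℝ)
    (hμhat : ∀ n ω, μhat n ω = (n : ℝ)⁻¹ * ∑ i ∈ Finset.range n, W i ω)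
    (hσhat : ∀ n ω, σhat n ω =
      Real.sqrt (((n : ℝ) - 1)⁻¹ * ∑ i ∈ Finset.range n, (W i ω - μhat n ω) ^ 2)) :
    ∀ t : ℝ, 0 < t →
      Tendsto (fun n : ℕ => P {ω | t < (n : ℝ) * (μhat n ω / σhat n ω) ^ 2}) atTop
        (nhds 1) := by
  intro t _
  set g : EuclideanSpace ℝ (Fin q) × ℝ → ℝ :=
    fun p => ∑ j : Fin J, η j * p.2 * gaussKernel σ₀ p.1 (x j)
  have hg : Measurable g := by
    refine Continuous.measurable (continuous_finsetSum _ fun j _ => ?_)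
    unfold gaussKernel; fun_prop
  have hWg : ∀ i ω, W i ω = g (X i ω, ε i ω) := hW
  have hlln := strong_law_ae_of_eq_comp hindep hident hg hWg (hWL2.integrable one_le_two)
  have hlln_sq := strong_law_ae_of_eq_comp hindep hident (hg.pow_const 2)
    (f := fun i ω => W i ω ^ 2) (fun i ω => by rw [hWg]) hWL2.integrable_sq
  refine tendsto_measure_of_ae_eventually_mem ?_
  filter_upwards [hlln, hlln_sq] with ω hω hω_sq
  have hvar_eq : variance (W 0) P = ∫ ω, W 0 ω ^ 2 ∂P - (∫ ω, W 0 ω ∂P) ^ 2 :=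
    variance_eq_sub hWL2
  have hσlim := (tendsto_sampleVariance hω hω_sq).sqrt
  rw [← hvar_eq] at hσlim
  have hμlim := hω.congr fun n => (sampleMean_eq_sum_div (fun i => W i ω) n).symm
  filter_upwards [(tendsto_natCast_mul_sq_div_atTop hμlim hσlim hmean
    (Real.sqrt_pos.2 hvar).ne').eventually_gt_atTop t] with n hn
  rwa [hσhat, hμhat]

/-- **Theorem 3 of the paper.** Under a fixed alternative, where
`E[W] ≠ 0` for `W = Σ_j η_j ε k(X, x_j)`, with `E[W²] < ∞` and `Var(W) > 0`,
for every `t > 0` we have `P(n (μ̂_n/σ̂_n)² > t) → 1` as `n → ∞`. -/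
theorem svm_tstat_consistency_fixed_alternative
    {Ω : Type*} [MeasurableSpace Ω] (P : Measure Ω) [IsProbabilityMeasure P]
    (q J : ℕ) (x : Fin J → EuclideanSpace ℝ (Fin q)) (η : Fin J → ℝ)
    (σ₀ : ℝ) (hσ₀ : 0 < σ₀)
    (X : ℕ → Ω → EuclideanSpace ℝ (Fin q)) (ε : ℕ → Ω → ℝ)
    (hXmeas : ∀ i, Measurable (X i)) (hεmeas : ∀ i, Measurable (ε i))
    (hindep : iIndepFun (fun i ω => (X i ω, ε i ω)) P)
    (hident : ∀ i, IdentDistrib (fun ω => (X i ω, ε i ω)) (fun ω => (X 0 ω, ε 0 ω)) P P)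
    (W : ℕ → Ω → ℝ)
    (hW : ∀ i ω, W i ω = ∑ j : Fin J, η j * ε i ω * gaussKernel σ₀ (X i ω) (x j))
    (hmean : ∫ ω, W 0 ω ∂P ≠ 0)
    (hWL2 : MemLp (W 0) 2 P)
    (hvar : 0 < variance (W 0) P)
    (μhat σhat : ℕ → Ω → ℝ)
    (hμhat : ∀ n ω, μhat n ω = (n : ℝ)⁻¹ * ∑ i ∈ Finset.range n, W i ω)
    (hσhat : ∀ n ω, σhat n ω =
      Real.sqrt (((n : ℝ) - 1)⁻¹ * ∑ i ∈ Finset.range n, (W i ω - μhat n ω) ^ 2)) :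
    ∀ t : ℝ, 0 < t →
      Tendsto (fun n : ℕ => P {ω | t < (n : ℝ) * (μhat n ω / σhat n ω) ^ 2}) atTop
        (nhds 1) :=
  svm_tstat_consistency_fixed_alternative_general P q J x η σ₀ X ε hindep hident W hW hmean hWL2
    hvar μhat σhat hμhat hσhat
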